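/- arXiv:1804.10952 — 2 statements merged into one kernel-verified Lean document; each statement's English description precedes it below -/
import Mathlib

section
/- Let K be an AEC and μ an infinite cardinal. Suppose M ∈ K_μ and N ∈ K with |N| ≥ μ satisfy M ≤_K N, and suppose that for every B ∈ K_μ with M ≤_K B there is an embedding f : B → N with f ↾ M = id_M. Then: (1) if min(LST(K), |N|) ≤ μ, then M is an amalgamation base in K_μ; (2) if LST(K) ≤ μ, then N realizes every Galois type over M (N is full over M), and hence |S(M)| ≤ |N|. -/
universe u

open Cardinal Set

variable {τ : Type u}

/-- `f` is a `K`-embedding of `M` into `N` (set-based presentation of an AEC). -/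
def IsEmb (le : Set τ → Set τ → Prop) (M N : Set τ) (f : τ → τ) : Prop :=
  Set.InjOn f M ∧ le (f '' M) N

/-- The set of Galois types over `M` (types realized in some `K`-extension of `M`). -/
def GTypes {Tp : Type u} (K : Set (Set τ)) (le : Set τ → Set τ → Prop)
    (tp : τ → Set τ → Set τ → Tp) (M : Set τ) : Set Tp :=
  {p : Tp | ∃ B ∈ K, le M B ∧ ∃ b ∈ B, p = tp b M B}

/-- Suppose `M ∈ K_μ`, `N ∈ K` with `|N| ≥ μ`, `M ≤_K N`, and every `B ∈ K_μ` with
`M ≤_K B` embeds into `N` over `M`.  Then: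
(1) if `min(LST(K), |N|) ≤ μ` then `M` is an amalgamation base in `K_μ`;
(2) if `LST(K) ≤ μ` then `N` realizes every Galois type over `M` (is full over `M`),
and hence `|S(M)| ≤ |N|`. -/
theorem stmt_9 {Tp : Type u} (μ lst : Cardinal.{u}) (hμ : ℵ₀ ≤ μ)
    (K : Set (Set τ)) (le : Set τ → Set τ → Prop)
    (hle_refl : ∀ M ∈ K, le M M)
    (hle_sub : ∀ {M N : Set τ}, le M N → M ⊆ N)
    (hle_trans : ∀ {M N P : Set τ}, le M N → le N P → le M P)
    (hcoherence : ∀ {M M' N : Set τ}, M ⊆ M' → le M N → le M' N → le M M')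
    -- Löwenheim–Skolem–Tarski: every subset of a model is contained in a small submodel
    (hLST : ∀ N ∈ K, ∀ Z : Set τ, Z ⊆ N →
      ∃ M ∈ K, Z ⊆ M ∧ #↥M ≤ max lst #↥Z ∧ le M N)
    (tp : τ → Set τ → Set τ → Tp)
    -- invariance of Galois types under embeddings fixing the base model pointwise
    (htpInv : ∀ (M B N' : Set τ) (f : τ → τ) (b : τ),
      Set.InjOn f B → le (f '' B) N' → (∀ x ∈ M, f x = x) →
      le M B → le M N' → b ∈ B → tp b M B = tp (f b) M N')
    -- the type of b over M does not depend on the ambient model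
    (htpAmb : ∀ (b : τ) (M B B' : Set τ), le B B' → b ∈ B → le M B →
      tp b M B = tp b M B')
    (M N : Set τ) (hM : M ∈ K) (hMc : #↥M = μ) (hN : N ∈ K) (hNc : μ ≤ #↥N)
    (hMN : le M N)
    (hemb : ∀ B ∈ K, #↥B = μ → le M B →
      ∃ f : τ → τ, Set.InjOn f B ∧ le (f '' B) N ∧ ∀ x ∈ M, f x = x) :
    (min lst #↥N ≤ μ →
      ∀ B C : Set τ, B ∈ K → C ∈ K → #↥B = μ → #↥C = μ → le M B → le M C →
        ∃ D ∈ K, #↥D = μ ∧ ∃ fB fC : τ → τ, IsEmb le B D fB ∧ IsEmb le C D fC ∧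
          (∀ x ∈ M, fB x = x) ∧ (∀ x ∈ M, fC x = x)) ∧
    (lst ≤ μ →
      (∀ p ∈ GTypes K le tp M, ∃ b ∈ N, p = tp b M N) ∧
      #↥(GTypes K le tp M) ≤ #↥N) := by
  constructor
  · intro hmin B C hB hC hBc hCc hMB hMC
    obtain ⟨f, hfinj, hfN, hfM⟩ := hemb B hB hBc hMB
    obtain ⟨g, hginj, hgN, hgM⟩ := hemb C hC hCc hMC
    rcases le_or_gt lst μ with hlst | hlst
    · obtain ⟨D, hD, hZD, hDc, hDN⟩ := hLST N hN (f '' B ∪ g '' C)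
        (union_subset (hle_sub hfN) (hle_sub hgN))
      have hfBD : f '' B ⊆ D := subset_union_left.trans hZD
      have hgCD : g '' C ⊆ D := subset_union_right.trans hZD
      have hDcard : #↥D = μ := by
        apply le_antisymm
        · refine hDc.trans (max_le hlst ?_)
          calc #↥(f '' B ∪ g '' C) ≤ #↥(f '' B) + #↥(g '' C) := Cardinal.mk_union_le _ _
            _ = μ + μ := by
              rw [Cardinal.mk_image_eq_of_injOn _ _ hfinj,
                Cardinal.mk_image_eq_of_injOn _ _ hginj, hBc, hCc]
            _ = μ := Cardinal.add_eq_self hμ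
        · calc μ = #↥(f '' B) := by
                rw [Cardinal.mk_image_eq_of_injOn _ _ hfinj, hBc]
            _ ≤ #↥D := Cardinal.mk_le_mk_of_subset hfBD
      exact ⟨D, hD, hDcard, f, g, ⟨hfinj, hcoherence hfBD hfN hDN⟩,
        ⟨hginj, hcoherence hgCD hgN hDN⟩, hfM, hgM⟩
    · have hNμ : #↥N ≤ μ := by
        rcases min_le_iff.mp hmin with h | h
        · exact absurd h (not_le.mpr hlst)
        · exact h
      exact ⟨N, hN, le_antisymm hNμ hNc, f, g, ⟨hfinj, hfN⟩, ⟨hginj, hgN⟩, hfM, hgM⟩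
  · intro hlst
    have hfull : ∀ p ∈ GTypes K le tp M, ∃ b ∈ N, p = tp b M N := by
      rintro p ⟨B, hB, hMB, b, hbB, rfl⟩
      obtain ⟨B', hB', hZB', hB'c, hB'B⟩ := hLST B hB (M ∪ {b})
        (union_subset (hle_sub hMB) (by simpa using hbB))
      have hMB' : le M B' := hcoherence (subset_union_left.trans hZB') hMB hB'B
      have hbB' : b ∈ B' := hZB' (mem_union_right _ rfl)
      have hB'card : #↥B' = μ := by
        apply le_antisymm
        · refine hB'c.trans (max_le hlst ?_)
          calc #↥(M ∪ {b} : Set τ) ≤ #↥M + #↥({b} : Set τ) := Cardinal.mk_union_le _ _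
            _ ≤ μ + μ := by
              rw [hMc, Cardinal.mk_singleton]
              exact add_le_add le_rfl (le_trans Cardinal.one_le_aleph0 hμ)
            _ = μ := Cardinal.add_eq_self hμ
        · rw [← hMc]
          exact Cardinal.mk_le_mk_of_subset (subset_union_left.trans hZB')
      obtain ⟨f, hfinj, hfN, hfM⟩ := hemb B' hB' hB'card hMB'
      refine ⟨f b, hle_sub hfN ⟨b, hbB', rfl⟩, ?_⟩
      rw [← htpAmb b M B' B hB'B hbB' hMB']
      exact htpInv M B' N f b hfinj hfN hfM hMB' hMN hbB'
    refine ⟨hfull, ?_⟩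
    choose b hbN hpb using hfull
    have hinj : Function.Injective
        (fun p : ↥(GTypes K le tp M) => (⟨b p.1 p.2, hbN p.1 p.2⟩ : ↥N)) := by
      rintro ⟨p, hp⟩ ⟨q, hq⟩ h
      simp only [Subtype.mk.injEq] at h
      have : p = q := by rw [hpb p hp, hpb q hq, h]
      simpa using this
    exact Cardinal.mk_le_of_injective hinj
end

section
/- Let κ be a regular uncountable cardinal. If ⟨Ω_β : β < κ⟩ is a sequence of elements of H_κ witnessing ◊⁻(H_κ), then for every parameter z ∈ H_{κ⁺} and every subset Ω ⊆ H_κ, the set { β < κ : there exists an elementary submodel M ≺ H_{κ⁺} with z ∈ M, M ∩ κ = β, and M ∩ Ω = Ω_β } is stationary in κ. -/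
universe u

open Cardinal FirstOrder

/-- Relation symbols: a single binary relation (membership). -/
def memRel : ℕ → Type
  | 2 => Unit
  | _ => Empty

/-- The first-order language with a single binary relation symbol (membership). -/
def memLang : FirstOrder.Language.{0, 0} := ⟨fun _ => Empty, memRel⟩

/-- `x` is a set of hereditary cardinality less than `θ`. -/
def HCardLT (θ : Cardinal.{u + 1}) : ZFSet.{u} → Prop :=
  ZFSet.mem_wf.fix fun x IH => #x.toSet < θ ∧ ∀ y (h : y ∈ x), IH y h

/-- `H_θ`: the collection of sets of hereditary cardinality less than `θ`. -/
def Hset (θ : Cardinal.{u + 1}) : Set ZFSet.{u} := {x | HCardLT θ x}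

/-- `H_θ` as a structure in the language of membership. -/
noncomputable instance HsetStructure (θ : Cardinal.{u + 1}) :
    memLang.Structure ↥(Hset θ) where
  funMap := fun f _ => f.elim
  RelMap := fun {n} r x =>
    match n, r, x with
    | 2, _, x => ((x 0 : ↥(Hset θ)) : ZFSet.{u}) ∈ ((x 1 : ↥(Hset θ)) : ZFSet.{u})
    | 0, r, _ => r.elim
    | 1, r, _ => r.elim
    | (_ + 3), r, _ => r.elim

/-- `S` is a club (closed unbounded) subset of the ordinal `κ`. -/
def IsClubIn (κ : Ordinal.{u}) (S : Set Ordinal.{u}) : Prop :=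
  (∀ T : Set Ordinal.{u}, T ⊆ S → T.Nonempty →
      (∃ β, β < κ ∧ ∀ α ∈ T, α ≤ β) → sSup T ∈ S) ∧
  (∀ β, β < κ → ∃ α ∈ S, β < α ∧ α < κ)

/-- The guessing statement at `β`: there is an elementary submodel `M ≺ H_{κ⁺}` with
`z ∈ M`, `M ∩ κ = β` (where `o` is the von Neumann representation of the ordinals, so
that `M ∩ κ`, the set of elements of `M` that are members of the ordinal `κ`, equals
the set of members of the ordinal `β`), and `M ∩ Ω = Ω_β`. -/
def Guess (κ : Cardinal.{u}) (o Ωseq : Ordinal.{u} → ZFSet.{u}) (z : ZFSet.{u})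
    (hz : z ∈ Hset (Cardinal.lift.{u + 1} (Order.succ κ))) (Ω : Set ZFSet.{u})
    (β : Ordinal.{u}) : Prop :=
  ∃ S : memLang.ElementarySubstructure ↥(Hset (Cardinal.lift.{u + 1} (Order.succ κ))),
    (⟨z, hz⟩ : ↥(Hset (Cardinal.lift.{u + 1} (Order.succ κ)))) ∈ S ∧
    ({x : ZFSet.{u} |
        (∃ hx : x ∈ Hset (Cardinal.lift.{u + 1} (Order.succ κ)),
          (⟨x, hx⟩ : ↥(Hset (Cardinal.lift.{u + 1} (Order.succ κ)))) ∈ S) ∧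
        x ∈ o κ.ord}
      = {x : ZFSet.{u} | x ∈ o β}) ∧
    ({x : ZFSet.{u} |
        (∃ hx : x ∈ Hset (Cardinal.lift.{u + 1} (Order.succ κ)),
          (⟨x, hx⟩ : ↥(Hset (Cardinal.lift.{u + 1} (Order.succ κ)))) ∈ S) ∧
        x ∈ Ω}
      = (Ωseq β).toSet)

-- auxiliary lemmas (to be placed between the given defs and the theorem)
section Aux

open FirstOrder.Language

theorem ZFSet.mem_toSet (a x : ZFSet.{u}) : a ∈ x.toSet ↔ a ∈ x := Iff.rfl

lemma HCardLT_iff (θ : Cardinal.{u+1}) (x : ZFSet.{u}) :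
    HCardLT θ x ↔ #x.toSet < θ ∧ ∀ y ∈ x, HCardLT θ y := by
  unfold HCardLT
  rw [WellFounded.fix_eq]

lemma mem_Hset_iff {θ : Cardinal.{u+1}} {x : ZFSet.{u}} :
    x ∈ Hset θ ↔ #x.toSet < θ ∧ ∀ y ∈ x, y ∈ Hset θ := HCardLT_iff θ x

lemma Hset_trans {θ : Cardinal.{u+1}} {x y : ZFSet.{u}} (hx : x ∈ Hset θ) (hy : y ∈ x) :
    y ∈ Hset θ := (mem_Hset_iff.1 hx).2 y hy

lemma Hset_mono {θ θ' : Cardinal.{u+1}} (h : θ ≤ θ') : Hset θ ⊆ Hset θ' := by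
  intro x hx
  induction x using ZFSet.inductionOn with
  | _ x ih =>
    rw [mem_Hset_iff] at hx ⊢
    exact ⟨hx.1.trans_le h, fun y hy => ih y hy (hx.2 y hy)⟩

lemma insert_mem_Hset {θ : Cardinal.{u+1}} (hθ : ℵ₀ ≤ θ) {x y : ZFSet.{u}}
    (hx : x ∈ Hset θ) (hy : y ∈ Hset θ) : ({x, y} : ZFSet.{u}) ∈ Hset θ := by
  rw [mem_Hset_iff]
  constructor
  · refine lt_of_lt_of_le ?_ hθ
    have : ({x, y} : ZFSet.{u}).toSet = {x, y} := by
      ext w; simp [ZFSet.mem_toSet, ZFSet.mem_pair]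
    rw [this]
    exact ((Set.finite_singleton y).insert x).lt_aleph0
  · intro w hw
    rcases ZFSet.mem_pair.1 hw with rfl | rfl <;> assumption

lemma singleton_mem_Hset {θ : Cardinal.{u+1}} (hθ : ℵ₀ ≤ θ) {x : ZFSet.{u}}
    (hx : x ∈ Hset θ) : ({x} : ZFSet.{u}) ∈ Hset θ := by
  rw [mem_Hset_iff]
  constructor
  · refine lt_of_lt_of_le ?_ hθ
    have : ({x} : ZFSet.{u}).toSet = {x} := by
      ext w; simp [ZFSet.mem_toSet, ZFSet.mem_singleton]
    rw [this]
    exact (Set.finite_singleton x).lt_aleph0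
  · intro w hw
    rcases ZFSet.mem_singleton.1 hw with rfl; exact hx

lemma witness_helper {L : Language} {M : Type w} [L.Structure M]
    (S : L.ElementarySubstructure M) {n : ℕ} (ψ : L.BoundedFormula (Fin n) 1)
    (v : Fin n → S) (w : M)
    (hw : ψ.Realize (fun i => (v i : M)) (fun _ => w)) :
    ∃ a : M, a ∈ S ∧ ψ.Realize (fun i => (v i : M)) (fun _ => a) := by
  have hsnoc : ∀ (N : Type w) (b : N), (Fin.snoc (default : Fin 0 → N) b) = fun _ => b := by
    intro N b; funext i; fin_cases i; simp [Fin.snoc]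
  have h1 : Formula.Realize (L := L) (M := M) (BoundedFormula.ex ψ) (fun i => (v i : M)) := by
    rw [Formula.Realize, BoundedFormula.realize_ex]
    exact ⟨w, by rw [hsnoc]; exact hw⟩
  have hco : (fun i => (v i : M)) = (S.subtype ∘ v) := rfl
  rw [hco, S.subtype.map_formula] at h1
  rw [Formula.Realize, BoundedFormula.realize_ex] at h1
  obtain ⟨a, ha⟩ := h1
  rw [hsnoc] at ha
  refine ⟨(a : M), a.2, ?_⟩
  have ha' : ψ.toFormula.Realize (Sum.elim v (fun _ => a)) :=
    (BoundedFormula.realize_toFormula ψ _).2 ha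
  have h2 := (S.subtype.map_formula ψ.toFormula (Sum.elim v (fun _ => a))).2 ha'
  have h3 : (S.subtype ∘ Sum.elim v (fun (_ : Fin 1) => a)) =
      Sum.elim (fun i => (v i : M)) (fun (_ : Fin 1) => (a : M)) := by
    funext i; cases i <;> rfl
  rw [h3] at h2
  exact (BoundedFormula.realize_toFormula ψ _).1 h2

def mrel : memLang.Relations 2 := Unit.unit

lemma relMap_iff (θ : Cardinal.{u+1}) (a b : ↥(Hset θ)) :
    Structure.RelMap mrel ![a, b] ↔ (a : ZFSet.{u}) ∈ (b : ZFSet.{u}) := Iff.rfl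

open FirstOrder.Language.Term in
def ψempty : memLang.BoundedFormula (Fin 0) 1 :=
  BoundedFormula.all (mrel.boundedFormula₂ (var (Sum.inr 1)) (var (Sum.inr 0))).not

open FirstOrder.Language.Term in
def ψz : memLang.BoundedFormula (Fin 1) 1 :=
  BoundedFormula.all ((mrel.boundedFormula₂ (var (Sum.inr 1)) (var (Sum.inl 0))).imp
    (mrel.boundedFormula₂ (var (Sum.inr 0)) (var (Sum.inr 1))))

open FirstOrder.Language.Term in
def ψc : memLang.BoundedFormula (Fin 1) 1 :=
  (BoundedFormula.ex ((mrel.boundedFormula₂ (var (Sum.inr 1)) (var (Sum.inl 0))) ⊓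
    (mrel.boundedFormula₂ (var (Sum.inr 0)) (var (Sum.inr 1))))) ⊓ ψz.not

open FirstOrder.Language.Term in
def ψu : memLang.BoundedFormula (Fin 2) 1 :=
  (mrel.boundedFormula₂ (var (Sum.inr 0)) (var (Sum.inl 0))) ⊓
    (mrel.boundedFormula₂ (var (Sum.inl 1)) (var (Sum.inr 0)))

variable {θ : Cardinal.{u+1}}

lemma realize_ψempty (v : Fin 0 → ↥(Hset θ)) (w : ↥(Hset θ)) :
    ψempty.Realize v (fun _ => w) ↔ ∀ y : ↥(Hset θ), ¬((y : ZFSet.{u}) ∈ (w : ZFSet.{u})) := by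
  simp [ψempty, BoundedFormula.realize_all, BoundedFormula.realize_not,
    BoundedFormula.realize_rel₂, relMap_iff, Fin.snoc]

lemma realize_ψz (p w : ↥(Hset θ)) :
    ψz.Realize (fun _ => p) (fun _ => w) ↔
      ∀ y : ↥(Hset θ), (y : ZFSet.{u}) ∈ (p : ZFSet.{u}) → (w : ZFSet.{u}) ∈ (y : ZFSet.{u}) := by
  simp [ψz, BoundedFormula.realize_all, BoundedFormula.realize_imp,
    BoundedFormula.realize_rel₂, relMap_iff, Fin.snoc]

lemma realize_ψc (p w : ↥(Hset θ)) :
    ψc.Realize (fun _ => p) (fun _ => w) ↔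
      ((∃ y : ↥(Hset θ), (y : ZFSet.{u}) ∈ (p : ZFSet.{u}) ∧ (w : ZFSet.{u}) ∈ (y : ZFSet.{u})) ∧
        ¬ ∀ y : ↥(Hset θ), (y : ZFSet.{u}) ∈ (p : ZFSet.{u}) → (w : ZFSet.{u}) ∈ (y : ZFSet.{u})) := by
  simp [ψc, ψz, BoundedFormula.realize_inf, BoundedFormula.realize_ex,
    BoundedFormula.realize_all, BoundedFormula.realize_imp, BoundedFormula.realize_not,
    BoundedFormula.realize_rel₂, relMap_iff, Fin.snoc]

lemma realize_ψu (c g w : ↥(Hset θ)) :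
    ψu.Realize (fun i => if i = 0 then c else g) (fun _ => w) ↔
      ((w : ZFSet.{u}) ∈ (c : ZFSet.{u}) ∧ (g : ZFSet.{u}) ∈ (w : ZFSet.{u})) := by
  simp [ψu, BoundedFormula.realize_inf, BoundedFormula.realize_rel₂, relMap_iff, Fin.snoc]

end Aux


/-- Let `κ` be a regular uncountable cardinal.  If `⟨Ω_β : β < κ⟩` is a sequence of
elements of `H_κ` witnessing `◊⁻(H_κ)`, then for every parameter `z ∈ H_{κ⁺}` and
every `Ω ⊆ H_κ`, the set of `β < κ` at which there is an elementary submodel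
`M ≺ H_{κ⁺}` with `z ∈ M`, `M ∩ κ = β` and `M ∩ Ω = Ω_β` is stationary in `κ`. -/
theorem stmt_19 (κ : Cardinal.{u}) (hreg : κ.IsRegular) (hunc : ℵ₀ < κ)
    (o : Ordinal.{u} → ZFSet.{u})
    -- `o` is the von Neumann representation of the ordinals up to `κ`
    (ho : ∀ (x : ZFSet.{u}) (α : Ordinal.{u}), α ≤ κ.ord →
      (x ∈ o α ↔ ∃ β < α, x = o β))
    (hoH : ∀ β < κ.ord, o β ∈ Hset (Cardinal.lift.{u + 1} κ))
    (Ωseq : Ordinal.{u} → ZFSet.{u})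
    -- `⟨Ω_β : β < κ⟩` is a sequence of elements of `H_κ` ...
    (hΩseqH : ∀ β < κ.ord, Ωseq β ∈ Hset (Cardinal.lift.{u + 1} κ))
    -- ... witnessing `◊⁻(H_κ)`
    (hwitness : ∀ (z : ZFSet.{u})
        (hz : z ∈ Hset (Cardinal.lift.{u + 1} (Order.succ κ))) (Ω : Set ZFSet.{u}),
        Ω ⊆ Hset (Cardinal.lift.{u + 1} κ) →
        ∃ β < κ.ord, Guess κ o Ωseq z hz Ω β) :
    ∀ (z : ZFSet.{u}) (hz : z ∈ Hset (Cardinal.lift.{u + 1} (Order.succ κ)))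
      (Ω : Set ZFSet.{u}), Ω ⊆ Hset (Cardinal.lift.{u + 1} κ) →
      ∀ C : Set Ordinal.{u}, IsClubIn κ.ord C →
        ∃ β ∈ C, β < κ.ord ∧ Guess κ o Ωseq z hz Ω β := by
  intro z hz Ω hΩ C hC
  classical
  set θ : Cardinal.{u+1} := Cardinal.lift.{u + 1} (Order.succ κ) with hθdef
  have hκℵ : ℵ₀ ≤ κ := hreg.aleph0_le
  have hθℵ : ℵ₀ ≤ θ := by
    rw [hθdef, Cardinal.aleph0_le_lift]
    exact hκℵ.trans (Order.le_succ κ)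
  have hsub : Hset (Cardinal.lift.{u + 1} κ) ⊆ Hset θ :=
    Hset_mono (Cardinal.lift_le.2 (Order.le_succ κ))
  have hord0 : (0 : Ordinal.{u}) < κ.ord := by
    rw [Cardinal.lt_ord, Ordinal.card_zero]
    exact hreg.pos
  have o_inj : ∀ {γ δ : Ordinal.{u}}, γ < κ.ord → δ < κ.ord → o γ = o δ → γ = δ := by
    intro γ δ hγ hδ h
    rcases lt_trichotomy γ δ with h1 | h1 | h1
    · have hm : o γ ∈ o δ := (ho (o γ) δ hδ.le).2 ⟨γ, h1, rfl⟩
      rw [h] at hm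
      exact absurd hm (ZFSet.mem_irrefl _)
    · exact h1
    · have hm : o δ ∈ o γ := (ho (o δ) γ hγ.le).2 ⟨δ, h1, rfl⟩
      rw [h] at hm
      exact absurd hm (ZFSet.mem_irrefl _)
  have mem_o_iff : ∀ {γ α : Ordinal.{u}}, γ < κ.ord → α ≤ κ.ord →
      (o γ ∈ o α ↔ γ < α) := by
    intro γ α hγ hα
    constructor
    · intro hm
      obtain ⟨δ, hδα, hδ⟩ := (ho (o γ) α hα).1 hm
      rwa [o_inj hγ (hδα.trans_le hα) hδ]
    · intro hlt
      exact (ho (o γ) α hα).2 ⟨γ, hlt, rfl⟩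
  have ho0 : o 0 = (∅ : ZFSet.{u}) := by
    apply ZFSet.ext
    intro y
    simp only [ZFSet.notMem_empty, iff_false]
    intro hy
    obtain ⟨δ, hδ, _⟩ := (ho y 0 hord0.le).1 hy
    exact absurd hδ (not_lt_of_ge (zero_le : (0 : Ordinal.{u}) ≤ δ))
  -- the code of the club C
  set c : ZFSet.{u} := ZFSet.sep (fun x => ∃ α ∈ C, α < κ.ord ∧ x = o α) (o κ.ord) with hcdef
  have mem_c : ∀ x : ZFSet.{u}, x ∈ c ↔ x ∈ o κ.ord ∧ ∃ α ∈ C, α < κ.ord ∧ x = o α := by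
    intro x; rw [hcdef]; exact ZFSet.mem_sep
  have hoκcard : #(o κ.ord).toSet ≤ Cardinal.lift.{u + 1} κ := by
    have : ∀ x : (o κ.ord).toSet, ∃ δ : Ordinal.{u}, δ < κ.ord ∧ (x : ZFSet.{u}) = o δ := by
      intro x
      obtain ⟨δ, hδ, hx⟩ := (ho x κ.ord le_rfl).1 ((ZFSet.mem_toSet _ _).1 x.2)
      exact ⟨δ, hδ, hx⟩
    choose f hf1 hf2 using this
    have hinj : Function.Injective (fun x => (⟨f x, hf1 x⟩ : Set.Iio κ.ord)) := by
      intro x y hxy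
      apply Subtype.ext
      rw [hf2 x, hf2 y]
      simp only [Subtype.mk.injEq] at hxy
      rw [show f x = f y from congrArg Subtype.val hxy]
    calc #(o κ.ord).toSet ≤ #(Set.Iio κ.ord) := Cardinal.mk_le_of_injective hinj
      _ = Cardinal.lift.{u + 1} κ := by rw [Ordinal.mk_Iio_ordinal, Cardinal.card_ord]
  have hcH : c ∈ Hset θ := by
    rw [mem_Hset_iff]
    constructor
    · have hsubset : c.toSet ⊆ (o κ.ord).toSet := by
        intro x hx
        rw [ZFSet.mem_toSet] at hx ⊢
        exact ((mem_c x).1 hx).1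
      calc #c.toSet ≤ #(o κ.ord).toSet := Cardinal.mk_le_mk_of_subset hsubset
        _ ≤ Cardinal.lift.{u + 1} κ := hoκcard
        _ < θ := by rw [hθdef]; exact Cardinal.lift_lt.2 (Order.lt_succ κ)
    · intro y hy
      obtain ⟨-, α, -, hα, rfl⟩ := (mem_c y).1 hy
      exact hsub (hoH α hα)
  -- the pair z' coding z and c
  set z' : ZFSet.{u} := ({({z} : ZFSet.{u}), ({z, c} : ZFSet.{u})} : ZFSet.{u}) with hz'def
  have hsingH : ({z} : ZFSet.{u}) ∈ Hset θ := singleton_mem_Hset hθℵ hz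
  have hpairH : ({z, c} : ZFSet.{u}) ∈ Hset θ := insert_mem_Hset hθℵ hz hcH
  have hz'H : z' ∈ Hset θ := insert_mem_Hset hθℵ hsingH hpairH
  obtain ⟨β, hβ, S, hz'S, hSκ, hSΩ⟩ := hwitness z' hz'H Ω hΩ
  have hSκ' := Set.ext_iff.1 hSκ
  -- generic: elements of S give members of LHS set
  have memS_set : ∀ (a : ↥(Hset θ)), a ∈ S → (a : ZFSet.{u}) ∈ o κ.ord → (a : ZFSet.{u}) ∈ o β := by
    intro a haS haκ
    exact (hSκ' (a : ZFSet.{u})).1 ⟨⟨a.2, by rwa [Subtype.coe_eta]⟩, haκ⟩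
  have set_memS : ∀ x : ZFSet.{u}, x ∈ o β →
      (∃ hx : x ∈ Hset θ, (⟨x, hx⟩ : ↥(Hset θ)) ∈ S) ∧ x ∈ o κ.ord := by
    intro x hx
    exact (hSκ' x).2 hx
  -- step 1 : β > 0
  have hβpos : 0 < β := by
    obtain ⟨a, haS, ha⟩ := witness_helper S ψempty (fun i => i.elim0)
      ⟨(∅ : ZFSet.{u}), ho0 ▸ hsub (hoH 0 hord0)⟩
      ((realize_ψempty _ _).2 (fun y => ZFSet.notMem_empty _))
    rw [realize_ψempty] at ha
    have haempty : (a : ZFSet.{u}) = o 0 := by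
      rw [ho0]
      apply ZFSet.ext
      intro y
      simp only [ZFSet.notMem_empty, iff_false]
      intro hy
      exact ha ⟨y, Hset_trans a.2 hy⟩ hy
    have h0κ : (a : ZFSet.{u}) ∈ o κ.ord := by
      rw [haempty]; exact (mem_o_iff hord0 le_rfl).2 hord0
    have h0β : o 0 ∈ o β := by rw [← haempty]; exact memS_set a haS h0κ
    obtain ⟨δ, hδβ, -⟩ := (ho (o 0) β hβ.le).1 h0β
    exact lt_of_le_of_lt (zero_le : (0 : Ordinal.{u}) ≤ δ) hδβ
  -- step 2 : z ∈ S
  have hzS : (⟨z, hz⟩ : ↥(Hset θ)) ∈ S := by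
    obtain ⟨a, haS, ha⟩ := witness_helper S ψz (fun _ => ⟨⟨z', hz'H⟩, hz'S⟩)
      ⟨z, hz⟩ (by
        rw [realize_ψz]
        intro y hy
        rcases ZFSet.mem_pair.1 hy with h | h
        · rw [h]; exact ZFSet.mem_singleton.2 rfl
        · rw [h]; exact ZFSet.mem_pair.2 (Or.inl rfl))
    rw [realize_ψz] at ha
    have haz : (a : ZFSet.{u}) = z := by
      have h1 : (a : ZFSet.{u}) ∈ ({z} : ZFSet.{u}) :=
        ha ⟨({z} : ZFSet.{u}), hsingH⟩ (ZFSet.mem_pair.2 (Or.inl rfl))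
      exact ZFSet.mem_singleton.1 h1
    have : (⟨z, hz⟩ : ↥(Hset θ)) = a := Subtype.ext haz.symm
    rw [this]
    exact haS
  -- step 3 : c ∈ S
  have hcS : (⟨c, hcH⟩ : ↥(Hset θ)) ∈ S := by
    by_cases hzc : c = z
    · have : (⟨c, hcH⟩ : ↥(Hset θ)) = ⟨z, hz⟩ := Subtype.ext hzc
      rw [this]; exact hzS
    · obtain ⟨a, haS, ha⟩ := witness_helper S ψc (fun _ => ⟨⟨z', hz'H⟩, hz'S⟩)
        ⟨c, hcH⟩ (by
          rw [realize_ψc]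
          constructor
          · exact ⟨⟨({z, c} : ZFSet.{u}), hpairH⟩, ZFSet.mem_pair.2 (Or.inr rfl),
              ZFSet.mem_pair.2 (Or.inr rfl)⟩
          · intro hall
            have := hall ⟨({z} : ZFSet.{u}), hsingH⟩ (ZFSet.mem_pair.2 (Or.inl rfl))
            exact hzc (ZFSet.mem_singleton.1 this))
      rw [realize_ψc] at ha
      obtain ⟨⟨y, hy1, hy2⟩, hnot⟩ := ha
      have hac : (a : ZFSet.{u}) = c := by
        have hyz : (y : ZFSet.{u}) = ({z} : ZFSet.{u}) ∨ (y : ZFSet.{u}) = ({z, c} : ZFSet.{u}) :=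
          ZFSet.mem_pair.1 hy1
        have hazc : (a : ZFSet.{u}) = z ∨ (a : ZFSet.{u}) = c := by
          rcases hyz with h | h
          · rw [h] at hy2; exact Or.inl (ZFSet.mem_singleton.1 hy2)
          · rw [h] at hy2; exact ZFSet.mem_pair.1 hy2
        rcases hazc with h | h
        · exfalso
          apply hnot
          intro w hw
          rcases ZFSet.mem_pair.1 hw with hw' | hw'
          · rw [hw', h]; exact ZFSet.mem_singleton.2 rfl
          · rw [hw', h]; exact ZFSet.mem_pair.2 (Or.inl rfl)
        · exact h
      have : (⟨c, hcH⟩ : ↥(Hset θ)) = a := Subtype.ext hac.symm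
      rw [this]; exact haS
  -- step 4 : C ∩ β is unbounded in β
  have hub : ∀ γ, γ < β → ∃ α ∈ C, γ < α ∧ α < β := by
    intro γ hγβ
    have hγκ : γ < κ.ord := hγβ.trans hβ
    have hγβ' : o γ ∈ o β := (mem_o_iff hγκ hβ.le).2 hγβ
    obtain ⟨⟨hγH, hγS⟩, -⟩ := set_memS (o γ) hγβ'
    obtain ⟨α, hαC, hγα, hακ⟩ := hC.2 γ hγκ
    have hoαH : o α ∈ Hset θ := hsub (hoH α hακ)
    have hv : (fun i => (((fun i : Fin 2 => if i = 0 then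
          (⟨⟨c, hcH⟩, hcS⟩ : S) else ⟨⟨o γ, hγH⟩, hγS⟩) i : ↥S) : ↥(Hset θ))) =
        (fun i : Fin 2 => if i = 0 then (⟨c, hcH⟩ : ↥(Hset θ)) else ⟨o γ, hγH⟩) := by
      funext i
      by_cases h : i = 0 <;> simp [h]
    obtain ⟨a, haS, ha⟩ := witness_helper S ψu
      (fun i : Fin 2 => if i = 0 then (⟨⟨c, hcH⟩, hcS⟩ : S) else ⟨⟨o γ, hγH⟩, hγS⟩)
      ⟨o α, hoαH⟩ (by
        rw [hv, realize_ψu]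
        constructor
        · rw [mem_c]
          exact ⟨(mem_o_iff hακ le_rfl).2 hακ, α, hαC, hακ, rfl⟩
        · exact (mem_o_iff hγκ hακ.le).2 hγα)
    rw [hv, realize_ψu] at ha
    obtain ⟨hac, hγa⟩ := ha
    obtain ⟨haκ, α', hα'C, hα'κ, haα'⟩ := (mem_c (a : ZFSet.{u})).1 hac
    have haβ : (a : ZFSet.{u}) ∈ o β := memS_set a haS haκ
    have hα'β : α' < β := by
      rw [haα'] at haβ
      exact (mem_o_iff hα'κ hβ.le).1 haβ
    have hγα' : γ < α' := by
      rw [haα'] at hγa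
      exact (mem_o_iff hγκ hα'κ.le).1 hγa
    exact ⟨α', hα'C, hγα', hα'β⟩
  -- step 5 : β ∈ C
  set T : Set Ordinal.{u} := C ∩ Set.Iio β with hTdef
  have hTsub : T ⊆ C := Set.inter_subset_left
  have hTne : T.Nonempty := by
    obtain ⟨α, hαC, -, hαβ⟩ := hub 0 hβpos
    exact ⟨α, hαC, hαβ⟩
  have hTbdd : BddAbove T := ⟨β, fun α hα => le_of_lt hα.2⟩
  have hsup : sSup T = β := by
    apply le_antisymm
    · exact csSup_le hTne (fun b hb => le_of_lt hb.2)
    · by_contra hlt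
      push_neg at hlt
      obtain ⟨α, hαC, hsα, hαβ⟩ := hub (sSup T) hlt
      have : α ≤ sSup T := le_csSup hTbdd ⟨hαC, hαβ⟩
      exact absurd (hsα.trans_le this) (lt_irrefl _)
  have hβC : β ∈ C := by
    have := hC.1 T hTsub hTne ⟨β, hβ, fun α hα => le_of_lt hα.2⟩
    rwa [hsup] at this
  exact ⟨β, hβC, hβ, S, hzS, hSκ, hSΩ⟩
end
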